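/- Let k ≥ 1 be a natural number, and let Δ : Fin ℓ → Fin k → ℝ be nonnegative reals such that ∑_{i} ∑_{e} Δ i e ≤ N and ∏_{e} Δ i e ≤ OUT for every i (with N, OUT ≥ 0). Then ∑_{i} ∏_{e} Δ i e ≤ (N / k) · OUT^{1 - 1/k}. -/
import Mathlib

theorem stmt_0 {k ℓ : ℕ} (hk : 1 ≤ k) (Δ : Fin ℓ → Fin k → ℝ) (N OUT : ℝ)
    (hN : 0 ≤ N) (hOUT : 0 ≤ OUT)
    (hΔ : ∀ i e, 0 ≤ Δ i e)
    (hsum : ∑ i, ∑ e, Δ i e ≤ N)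
    (hprod : ∀ i, ∏ e, Δ i e ≤ OUT) :
    ∑ i, ∏ e, Δ i e ≤ (N / k) * OUT ^ (1 - 1 / (k : ℝ)) := by
  have hk0 : (0:ℝ) < k := by exact_mod_cast hk
  have hkinv : (0:ℝ) < 1 / k := by positivity
  have hexp : (0:ℝ) ≤ 1 - 1 / k := by
    rw [sub_nonneg, div_le_one hk0]
    exact_mod_cast hk
  have key : ∀ i, ∏ e, Δ i e ≤ ((1/(k:ℝ)) * ∑ e, Δ i e) * OUT ^ (1 - 1 / (k:ℝ)) := by
    intro i
    set P := ∏ e, Δ i e with hP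
    have hP0 : 0 ≤ P := Finset.prod_nonneg fun e _ => hΔ i e
    rcases eq_or_lt_of_le hP0 with h0 | hpos
    · rw [← h0]
      have : 0 ≤ ∑ e, Δ i e := Finset.sum_nonneg fun e _ => hΔ i e
      positivity
    · have hsplit : P = P ^ ((1:ℝ)/k) * P ^ (1 - 1/(k:ℝ)) := by
        rw [← Real.rpow_add hpos]
        simp
      rw [hsplit]
      have h1 : P ^ ((1:ℝ)/k) ≤ (1/(k:ℝ)) * ∑ e, Δ i e := by
        have := Real.geom_mean_le_arith_mean_weighted Finset.univ
          (fun _ : Fin k => 1/(k:ℝ)) (Δ i) (fun _ _ => le_of_lt hkinv)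
          (by simp [Finset.card_univ, mul_comm, div_mul_cancel₀, hk0.ne'])
          (fun e _ => hΔ i e)
        calc P ^ ((1:ℝ)/k) = ∏ e, Δ i e ^ ((1:ℝ)/k) := by
              rw [hP, ← Real.finset_prod_rpow _ _ (fun e _ => hΔ i e)]
          _ ≤ ∑ e, (1/(k:ℝ)) * Δ i e := this
          _ = (1/(k:ℝ)) * ∑ e, Δ i e := by rw [Finset.mul_sum]
      have h2 : P ^ (1 - 1/(k:ℝ)) ≤ OUT ^ (1 - 1/(k:ℝ)) :=
        Real.rpow_le_rpow hP0 (hprod i) hexp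
      exact mul_le_mul h1 h2 (Real.rpow_nonneg hP0 _)
        (mul_nonneg (le_of_lt hkinv) (Finset.sum_nonneg fun e _ => hΔ i e))
  calc ∑ i, ∏ e, Δ i e ≤ ∑ i, ((1/(k:ℝ)) * ∑ e, Δ i e) * OUT ^ (1 - 1/(k:ℝ)) :=
        Finset.sum_le_sum fun i _ => key i
    _ = ((1/(k:ℝ)) * ∑ i, ∑ e, Δ i e) * OUT ^ (1 - 1/(k:ℝ)) := by
        rw [← Finset.sum_mul, ← Finset.mul_sum]
    _ ≤ (N / k) * OUT ^ (1 - 1/(k:ℝ)) := by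
        apply mul_le_mul_of_nonneg_right _ (Real.rpow_nonneg hOUT _)
        rw [div_eq_mul_inv N, mul_comm N, ← one_div]
        exact mul_le_mul_of_nonneg_left hsum (le_of_lt hkinv)
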